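/- Let S be an abstract semigroup, x ∈ S, and let e, f ∈ S be idempotents such that x^n lies in the unit group of the monoid eSe for some integer n ≥ 1 and x^m lies in the unit group of the monoid fSf for some integer m ≥ 1. Then e = f. In other words, for each x ∈ S there is at most one idempotent e such that some positive power of x lies in the unit group of eSe. -/

import Mathlib

/-!
Powers of a unit of `eSe` are again units of `eSe`, so `x^((n+1)(m+1))` lies in the unit
groups of both `eSe` and `fSf`. If `t` is such a common unit, with inverses `y ∈ eSe` and
`z ∈ fSf`, then `e * f = e * (t * z) = t * z = f` and `e * f = (y * t) * f = y * t = e`.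
-/

/-- `spow x n = x^(n+1)`, the `(n+1)`-st power of `x` in a semigroup; it ranges over all
positive powers of `x` as `n` ranges over `ℕ`. -/
def spow {S : Type*} [Mul S] (x : S) : ℕ → S
  | 0 => x
  | n + 1 => spow x n * x

/-- `unitGrpMem e t` says that `t` lies in the unit group of the monoid
`eSe = {eye : y ∈ S}` (whose identity element is the idempotent `e`): `t ∈ eSe` and there
is `y ∈ eSe` with `t * y = y * t = e`. -/
def unitGrpMem {S : Type*} [Mul S] (e t : S) : Prop :=
  (∃ s, t = e * s * e) ∧ ∃ y, (∃ s, y = e * s * e) ∧ t * y = e ∧ y * t = e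

section Semigroup

variable {S : Type*} [Semigroup S]

theorem spow_mul_spow (x : S) (n m : ℕ) : spow x n * spow x m = spow x (n + m + 1) := by
  induction m with
  | zero => rfl
  | succ m ih =>
    change spow x n * (spow x m * x) = spow x (n + m + 1) * x
    rw [← mul_assoc, ih]

theorem spow_spow (x : S) (n k : ℕ) : spow (spow x n) k = spow x (n * k + n + k) := by
  induction k with
  | zero => simp only [Nat.mul_zero, Nat.zero_add, Nat.add_zero]; rfl
  | succ k ih =>
    change spow (spow x n) k * spow x n = _
    rw [ih, spow_mul_spow]
    congr 1
    ring

theorem spow_spow_comm (x : S) (n m : ℕ) : spow (spow x n) m = spow (spow x m) n := by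
  rw [spow_spow, spow_spow]
  congr 1
  ring

variable {e t : S}

theorem idem_mul_of_mem_corner (he : e * e = e) (ht : ∃ s, t = e * s * e) : e * t = t := by
  obtain ⟨s, rfl⟩ := ht
  rw [← mul_assoc, ← mul_assoc, he]

theorem mul_idem_of_mem_corner (he : e * e = e) (ht : ∃ s, t = e * s * e) : t * e = t := by
  obtain ⟨s, rfl⟩ := ht
  rw [mul_assoc, he]

namespace unitGrpMem

theorem mul {a b : S} (he : e * e = e) (ha : unitGrpMem e a) (hb : unitGrpMem e b) :
    unitGrpMem e (a * b) := by
  obtain ⟨⟨s, hs⟩, y, ⟨u, hu⟩, hay, hya⟩ := ha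
  obtain ⟨⟨s', hs'⟩, z, ⟨v, hv⟩, hbz, hzb⟩ := hb
  refine ⟨⟨s * e * e * s', by rw [hs, hs']; simp only [mul_assoc]⟩, z * y,
    ⟨v * e * e * u, by rw [hu, hv]; simp only [mul_assoc]⟩, ?_, ?_⟩
  · calc a * b * (z * y) = a * (b * z) * y := by simp only [mul_assoc]
      _ = e := by rw [hbz, mul_idem_of_mem_corner he ⟨s, hs⟩, hay]
  · calc z * y * (a * b) = z * (y * a) * b := by simp only [mul_assoc]
      _ = e := by rw [hya, mul_idem_of_mem_corner he ⟨v, hv⟩, hzb]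

theorem spow (he : e * e = e) (ht : unitGrpMem e t) (k : ℕ) : unitGrpMem e (spow t k) := by
  induction k with
  | zero => exact ht
  | succ k ih => exact ih.mul he ht

end unitGrpMem

theorem eq_of_unitGrpMem_of_unitGrpMem {f : S} (he : e * e = e) (hf : f * f = f)
    (hte : unitGrpMem e t) (htf : unitGrpMem f t) : e = f := by
  obtain ⟨ht_mem_e, y, -, -, hyt⟩ := hte
  obtain ⟨ht_mem_f, z, -, htz, -⟩ := htf
  calc e = y * t * f := by rw [mul_assoc, mul_idem_of_mem_corner hf ht_mem_f, hyt]
    _ = e * f := by rw [hyt]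
    _ = e * t * z := by rw [mul_assoc, htz]
    _ = f := by rw [idem_mul_of_mem_corner he ht_mem_e, htz]

end Semigroup

/-- Let `S` be an abstract semigroup, `x ∈ S`, and let `e, f` be idempotents of `S` such
that some positive power of `x` lies in the unit group of `eSe` and some positive power of
`x` lies in the unit group of `fSf`.  Then `e = f`: there is at most one such idempotent. -/
theorem stmt_7 {S : Type*} [Semigroup S] (x e f : S)
    (he : e * e = e) (hf : f * f = f)
    (hne : ∃ n : ℕ, unitGrpMem e (spow x n))
    (hnf : ∃ m : ℕ, unitGrpMem f (spow x m)) :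
    e = f := by
  obtain ⟨n, hn⟩ := hne
  obtain ⟨m, hm⟩ := hnf
  refine eq_of_unitGrpMem_of_unitGrpMem he hf (hn.spow he m) ?_
  rw [spow_spow_comm]
  exact hm.spow hf n
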